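/- Let k ≥ 1, let r be a nonzero integer, and let C ≥ 0 be a real number. Define π^k_{2r}(x) = #{p ≤ x : p prime and p^k + 2r prime}, θ^k_{2r}(x) = ∑_{p ≤ x, p^k + 2r prime} (log p)², and li₂(x) = ∫₂^x dt/(log t)². Then θ^k_{2r}(x)/x → C as x → ∞ if and only if π^k_{2r}(x)/li₂(x) → C as x → ∞. -/

import Mathlib

/-!
Both counting functions are partial sums of one indicator sequence, weighted by `(log n)²`
and by `1`. Abel summation against `log² t` and against `1 / log² t` expresses each of `θ` and
`π` through the other, and integration by parts gives the same two identities for the pair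
`(x, li₂ x)`, up to constants. Subtracting `C` times the second pair, the error `π - C li₂` is
written through `θ - C x` and vice versa. An integral of a function that is `o(w)`, for a
weight `w ≥ 0` with divergent integral, is `o(∫ w)`; together with `li₂ x ≍ x / log² x` this
turns one error estimate into the other.
-/

open Filter Topology

/-- `π^k_{2r}(x) = #{p ≤ x : p prime and p^k + 2r prime}`. -/
noncomputable def primePairCount (k : ℕ) (r : ℤ) (x : ℝ) : ℕ :=
  ((Finset.range (⌊x⌋₊ + 1)).filter
    (fun p : ℕ => p.Prime ∧ ((p : ℤ) ^ k + 2 * r).toNat.Prime)).card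

/-- `θ^k_{2r}(x) = ∑_{p ≤ x, p^k + 2r prime} (log p)²`. -/
noncomputable def primePairTheta (k : ℕ) (r : ℤ) (x : ℝ) : ℝ :=
  ∑ p ∈ (Finset.range (⌊x⌋₊ + 1)).filter
      (fun p : ℕ => p.Prime ∧ ((p : ℤ) ^ k + 2 * r).toNat.Prime),
    (Real.log p) ^ 2

/-- `li₂(x) = ∫₂^x dt/(log t)²`. -/
noncomputable def li2 (x : ℝ) : ℝ := ∫ t in (2 : ℝ)..x, 1 / (Real.log t) ^ 2

open Real Asymptotics MeasureTheory

theorem MeasureTheory.LocallyIntegrableOn.intervalIntegrable_of_Ici {f : ℝ → ℝ} {a b c : ℝ}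
    (hf : LocallyIntegrableOn f (Set.Ici a)) (hab : a ≤ b) (hbc : b ≤ c) :
    IntervalIntegrable f volume b c :=
  (intervalIntegrable_iff_integrableOn_Icc_of_le hbc).mpr <|
    hf.integrableOn_compact_subset (Set.Icc_subset_Ici_iff hbc |>.mpr hab) isCompact_Icc

theorem Asymptotics.IsLittleO.intervalIntegral_atTop {u w : ℝ → ℝ} {a : ℝ}
    (huw : u =o[atTop] w) (hu : LocallyIntegrableOn u (Set.Ici a))
    (hw : LocallyIntegrableOn w (Set.Ici a)) (hw_nonneg : ∀ t ≥ a, 0 ≤ w t)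
    (hW : Tendsto (fun x => ∫ t in a..x, w t) atTop atTop) :
    (fun x => ∫ t in a..x, u t) =o[atTop] fun x => ∫ t in a..x, w t := by
  refine IsLittleO.of_bound fun ε hε => ?_
  obtain ⟨T, hT⟩ := eventually_atTop.mp
    ((huw.def (half_pos hε)).and (eventually_ge_atTop a))
  have haT : a ≤ T := (hT T le_rfl).2
  -- past `T`, `|u| ≤ ε/2 * w`; the integral over `[a, T]` is fixed while `∫ w` grows
  filter_upwards [hW.eventually_ge_atTop (2 / ε * ‖∫ t in a..T, u t‖),
    eventually_ge_atTop T] with x hWx hTx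
  have hW_nonneg : 0 ≤ ∫ t in a..x, w t :=
    intervalIntegral.integral_nonneg (haT.trans hTx) fun t ht => hw_nonneg t ht.1
  have hwTx : ∫ t in T..x, w t ≤ ∫ t in a..x, w t := by
    rw [← intervalIntegral.integral_add_adjacent_intervals
      (hw.intervalIntegrable_of_Ici le_rfl haT) (hw.intervalIntegrable_of_Ici haT hTx),
      le_add_iff_nonneg_left]
    exact intervalIntegral.integral_nonneg haT fun t ht => hw_nonneg t ht.1
  have hhead : ‖∫ t in a..T, u t‖ ≤ ε / 2 * ∫ t in a..x, w t := by
    rw [div_mul_eq_mul_div, div_le_iff₀ hε] at hWx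
    linarith
  have htail : ‖∫ t in T..x, u t‖ ≤ ε / 2 * ∫ t in a..x, w t :=
    calc ‖∫ t in T..x, u t‖ ≤ ∫ t in T..x, ε / 2 * w t :=
          intervalIntegral.norm_integral_le_of_norm_le hTx
            (.of_forall fun t ht => by
              simpa [abs_of_nonneg (hw_nonneg t (haT.trans ht.1.le))] using (hT t ht.1.le).1)
            ((hw.intervalIntegrable_of_Ici haT hTx).const_mul _)
      _ ≤ ε / 2 * ∫ t in a..x, w t := by
          rw [intervalIntegral.integral_const_mul]
          exact mul_le_mul_of_nonneg_left hwTx (by positivity)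
  rw [← intervalIntegral.integral_add_adjacent_intervals (hu.intervalIntegrable_of_Ici le_rfl haT)
    (hu.intervalIntegrable_of_Ici haT hTx), Real.norm_of_nonneg hW_nonneg]
  linarith [norm_add_le (∫ t in a..T, u t) (∫ t in T..x, u t)]

theorem tendsto_div_iff_isLittleO_sub_mul {α : Type*} {l : Filter α} {f g : α → ℝ} {C : ℝ}
    (hg : ∀ᶠ x in l, g x ≠ 0) :
    Tendsto (fun x => f x / g x) l (𝓝 C) ↔ (fun x => f x - C * g x) =o[l] g := by
  rw [isLittleO_iff_tendsto' (hg.mono fun x hx h => absurd h hx), ← tendsto_sub_nhds_zero_iff]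
  refine tendsto_congr' (hg.mono fun x hx => ?_)
  field_simp

theorem isBigO_two_div_log_one : (fun t => 2 / log t) =O[atTop] fun _ => (1 : ℝ) :=
  (tendsto_const_nhds.div_atTop tendsto_log_atTop).isBigO_one ℝ

theorem hasDerivAt_log_sq {t : ℝ} (ht : t ≠ 0) :
    HasDerivAt (fun t => log t ^ 2) (2 * log t / t) t :=
  ((hasDerivAt_log ht).fun_pow 2).congr_deriv (by push_cast; ring)

theorem hasDerivAt_one_div_log_sq {t : ℝ} (ht : 1 < t) :
    HasDerivAt (fun t => 1 / log t ^ 2) (-(2 / (t * log t ^ 3))) t := by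
  simp only [one_div]
  exact ((hasDerivAt_log_sq (by positivity)).fun_inv (pow_ne_zero 2 (log_pos ht).ne')).congr_deriv
    (by field_simp)

theorem continuousOn_one_div_log_sq : ContinuousOn (fun t => 1 / log t ^ 2) (Set.Ioi 1) :=
  fun t (ht : 1 < t) => ContinuousAt.continuousWithinAt <| by
    have := (log_pos ht).ne'
    fun_prop (disch := positivity)

theorem continuousOn_two_div_mul_log_pow_three :
    ContinuousOn (fun t => 2 / (t * log t ^ 3)) (Set.Ioi 1) :=
  fun t (ht : 1 < t) => ContinuousAt.continuousWithinAt <| by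
    have := (log_pos ht).ne'
    fun_prop (disch := positivity)

theorem continuousOn_two_mul_log_div : ContinuousOn (fun t => 2 * log t / t) (Set.Ioi 0) :=
  fun t (ht : 0 < t) => ContinuousAt.continuousWithinAt <| by fun_prop (disch := positivity)

theorem isBigO_two_div_mul_log_pow_three_mul_self :
    (fun t => 2 / (t * log t ^ 3) * t) =O[atTop] fun t => 1 / log t ^ 2 := by
  refine (isBigO_two_div_log_one.mul (isBigO_refl (fun t => 1 / log t ^ 2) _)).congr' ?_
    (.of_eq (by simp))
  filter_upwards [eventually_gt_atTop 1] with t ht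
  have := (log_pos ht).ne'
  field_simp

theorem Set.uIcc_two_subset_Ioi_one {x : ℝ} (hx : 2 ≤ x) : Set.uIcc 2 x ⊆ Set.Ioi 1 := by
  rw [Set.uIcc_of_le hx]
  exact Set.Icc_subset_Ioi_iff hx |>.mpr one_lt_two

theorem hasDerivAt_li2 {t : ℝ} (ht : 1 < t) : HasDerivAt li2 (1 / log t ^ 2) t :=
  intervalIntegral.integral_hasDerivAt_right
    (Chebyshev.intervalIntegrable_one_div_log_sq one_lt_two ht)
    (continuousOn_one_div_log_sq.stronglyMeasurableAtFilter isOpen_Ioi t ht)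
    (continuousOn_one_div_log_sq.continuousAt (Ioi_mem_nhds ht))

theorem li2_eq_div_log_sq_add_integral {x : ℝ} (hx : 2 ≤ x) :
    li2 x = x / log x ^ 2 - 2 / log 2 ^ 2 + ∫ t in (2 : ℝ)..x, 2 / (t * log t ^ 3) * t := by
  have hsub := Set.uIcc_two_subset_Ioi_one hx
  have := intervalIntegral.integral_mul_deriv_eq_deriv_mul (v := id) (v' := fun _ => 1)
    (fun t ht => hasDerivAt_one_div_log_sq (hsub ht)) (fun t _ => hasDerivAt_id t)
    (continuousOn_two_div_mul_log_pow_three.mono hsub).neg.intervalIntegrable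
    intervalIntegrable_const
  simp only [mul_one, neg_mul, intervalIntegral.integral_neg, id] at this
  rw [li2, this]
  ring

theorem log_sq_mul_li2_sub_integral {x : ℝ} (hx : 2 ≤ x) :
    log x ^ 2 * li2 x - ∫ t in (2 : ℝ)..x, 2 * log t / t * li2 t = x - 2 := by
  have hsub := Set.uIcc_two_subset_Ioi_one hx
  have := intervalIntegral.integral_mul_deriv_eq_deriv_mul
    (fun t ht => hasDerivAt_log_sq (zero_lt_one.trans (hsub ht)).ne')
    (fun t ht => hasDerivAt_li2 (hsub ht))
    (continuousOn_two_mul_log_div.mono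
      (hsub.trans (Set.Ioi_subset_Ioi zero_le_one))).intervalIntegrable
    (Chebyshev.intervalIntegrable_one_div_log_sq one_lt_two (by linarith))
  have hone : ∫ t in (2 : ℝ)..x, log t ^ 2 * (1 / log t ^ 2) = x - 2 := by
    rw [intervalIntegral.integral_congr (g := fun _ => (1 : ℝ)) fun t ht => ?_]
    · simp
    · have := (log_pos (hsub ht)).ne'
      field_simp
  rw [show li2 2 = 0 from intervalIntegral.integral_same, mul_zero, sub_zero] at this
  linarith

theorem div_log_sq_le_two_mul_li2 {x : ℝ} (hx : 4 ≤ x) : x / log x ^ 2 ≤ 2 * li2 x := by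
  have hlog : 0 < log x := log_pos (by linarith)
  calc x / log x ^ 2 ≤ 2 * ((x - 2) / log x ^ 2) := by
        rw [mul_div_assoc']
        gcongr
        linarith
    _ = 2 * ∫ _ in (2 : ℝ)..x, 1 / log x ^ 2 := by simp [div_eq_mul_inv]
    _ ≤ 2 * li2 x := by
      gcongr
      refine intervalIntegral.integral_mono_on (by linarith) (by simp)
        (Chebyshev.intervalIntegrable_one_div_log_sq one_lt_two (by linarith)) fun t ht => ?_
      have := log_pos (by linarith [ht.1] : (1 : ℝ) < t)
      gcongr
      exacts [by linarith [ht.1], ht.2]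

theorem tendsto_div_log_sq_atTop : Tendsto (fun x => x / log x ^ 2) atTop atTop := by
  have h : Tendsto (fun x => log x ^ 2 / x) atTop (𝓝[>] 0) := by
    have := tendsto_pow_log_div_mul_add_atTop 1 0 2 one_ne_zero
    refine tendsto_nhdsWithin_iff.2 ⟨by simpa using this, ?_⟩
    filter_upwards [eventually_gt_atTop 1] with x hx
    have := log_pos hx
    exact Set.mem_Ioi.2 (by positivity)
  simpa only [Pi.inv_def, inv_div] using h.inv_tendsto_nhdsGT_zero

theorem tendsto_li2_atTop : Tendsto li2 atTop atTop := by
  refine tendsto_atTop_mono' atTop ?_ (tendsto_div_log_sq_atTop.atTop_div_const two_pos)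
  filter_upwards [eventually_ge_atTop 4] with x hx
  linarith [div_log_sq_le_two_mul_li2 hx]

theorem isBigO_div_log_sq_li2 : (fun x => x / log x ^ 2) =O[atTop] li2 := by
  refine IsBigO.of_bound 2 ?_
  filter_upwards [eventually_ge_atTop 4] with x hx
  have := log_pos (by linarith : (1 : ℝ) < x)
  have hdiv : 0 ≤ x / log x ^ 2 := by positivity
  rw [norm_of_nonneg hdiv, norm_of_nonneg (by linarith [div_log_sq_le_two_mul_li2 hx])]
  exact div_log_sq_le_two_mul_li2 hx

theorem isBigO_log_sq_mul_li2 : (fun x => log x ^ 2 * li2 x) =O[atTop] fun x => x := by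
  refine ((isBigO_refl (fun x => log x ^ 2) _).mul
    Chebyshev.integral_one_div_log_sq_isBigO).congr' .rfl ?_
  filter_upwards [eventually_gt_atTop 1] with x hx
  have := (log_pos hx).ne'
  field_simp

theorem isBigO_two_mul_log_div_mul_li2 :
    (fun t => 2 * log t / t * li2 t) =O[atTop] fun _ => (1 : ℝ) := by
  refine ((isBigO_refl (fun t => 2 * log t / t) _).mul
    Chebyshev.integral_one_div_log_sq_isBigO).trans ?_
  refine isBigO_two_div_log_one.congr' ?_ .rfl
  filter_upwards [eventually_gt_atTop 1] with x hx
  have := (log_pos hx).ne'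
  field_simp

noncomputable def partialSum (c : ℕ → ℝ) (x : ℝ) : ℝ := ∑ k ∈ Finset.Icc 0 ⌊x⌋₊, c k

theorem locallyIntegrableOn_mul_partialSum {g : ℝ → ℝ} {a : ℝ} (ha : 0 ≤ a)
    (hg : ContinuousOn g (Set.Ici a)) (c : ℕ → ℝ) :
    LocallyIntegrableOn (fun t => g t * partialSum c t) (Set.Ici a) :=
  locallyIntegrableOn_mul_sum_Icc c ha (hg.locallyIntegrableOn measurableSet_Ici)

section PartialSum

variable {c : ℕ → ℝ}

theorem partialSum_log_sq_mul_eq (hc0 : c 0 = 0) (hc1 : c 1 = 0) {x : ℝ} (hx : 2 ≤ x) :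
    partialSum (fun k => log k ^ 2 * c k) x =
      log x ^ 2 * partialSum c x - ∫ t in (2 : ℝ)..x, 2 * log t / t * partialSum c t := by
  have hderiv {t : ℝ} (ht : t ∈ Set.Icc 2 x) :
      HasDerivAt (fun t => log t ^ 2) (2 * log t / t) t :=
    hasDerivAt_log_sq (by linarith [ht.1])
  have hint : IntegrableOn (deriv fun t => log t ^ 2) (Set.Icc 2 x) :=
    (continuousOn_two_mul_log_div.mono fun t ht => show 0 < t by linarith [ht.1])
      |>.integrableOn_Icc.congr_fun (fun t ht => (hderiv ht).deriv.symm) measurableSet_Icc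
  rw [partialSum, sum_mul_eq_sub_integral_mul₁ c hc0 hc1 x
    (fun t ht => (hderiv ht).differentiableAt) hint, ← intervalIntegral.integral_of_le hx]
  congr 1
  refine intervalIntegral.integral_congr fun t ht => ?_
  rw [Set.uIcc_of_le hx] at ht
  rw [(hderiv ht).deriv, partialSum]

theorem partialSum_eq_div_log_sq_add_integral (hc0 : c 0 = 0) (hc1 : c 1 = 0) {x : ℝ}
    (hx : 2 ≤ x) :
    partialSum c x = 1 / log x ^ 2 * partialSum (fun k => log k ^ 2 * c k) x +
      ∫ t in (2 : ℝ)..x, 2 / (t * log t ^ 3) * partialSum (fun k => log k ^ 2 * c k) t := by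
  have hderiv {t : ℝ} (ht : t ∈ Set.Icc 2 x) :
      HasDerivAt (fun t => 1 / log t ^ 2) (-(2 / (t * log t ^ 3))) t :=
    hasDerivAt_one_div_log_sq (by linarith [ht.1])
  have hint : IntegrableOn (deriv fun t => 1 / log t ^ 2) (Set.Icc 2 x) :=
    (continuousOn_two_div_mul_log_pow_three.mono fun t ht => show 1 < t by linarith [ht.1]).neg
      |>.integrableOn_Icc.congr_fun (fun t ht => (hderiv ht).deriv.symm) measurableSet_Icc
  have hcancel (k : ℕ) : 1 / log k ^ 2 * (log k ^ 2 * c k) = c k := by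
    rcases Nat.lt_or_ge k 2 with hk | hk
    · interval_cases k <;> simp [hc0, hc1]
    · have := (log_pos (Nat.one_lt_cast.mpr hk)).ne'
      field_simp
  rw [partialSum, ← Finset.sum_congr rfl fun k _ => hcancel k,
    sum_mul_eq_sub_integral_mul₁ _ (by simp) (by simp) x
      (fun t ht => (hderiv ht).differentiableAt) hint, ← intervalIntegral.integral_of_le hx,
    sub_eq_add_neg, ← intervalIntegral.integral_neg]
  congr 1
  refine intervalIntegral.integral_congr fun t ht => ?_
  rw [Set.uIcc_of_le hx] at ht
  rw [(hderiv ht).deriv, partialSum, neg_mul, neg_neg]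

theorem partialSum_sub_mul_li2_eq (hc0 : c 0 = 0) (hc1 : c 1 = 0) (C : ℝ) {x : ℝ}
    (hx : 2 ≤ x) :
    partialSum c x - C * li2 x =
      1 / log x ^ 2 * (partialSum (fun k => log k ^ 2 * c k) x - C * x) +
        (∫ t in (2 : ℝ)..x,
          2 / (t * log t ^ 3) * (partialSum (fun k => log k ^ 2 * c k) t - C * t)) +
        C * (2 / log 2 ^ 2) := by
  have hweight := continuousOn_two_div_mul_log_pow_three.mono (Set.Ici_subset_Ioi.2 one_lt_two)
  have hsplit : ∫ t in (2 : ℝ)..x,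
      2 / (t * log t ^ 3) * (partialSum (fun k => log k ^ 2 * c k) t - C * t) =
      (∫ t in (2 : ℝ)..x, 2 / (t * log t ^ 3) * partialSum (fun k => log k ^ 2 * c k) t) -
        C * ∫ t in (2 : ℝ)..x, 2 / (t * log t ^ 3) * t := by
    rw [← intervalIntegral.integral_const_mul, ← intervalIntegral.integral_sub
      ((locallyIntegrableOn_mul_partialSum zero_le_two hweight _).intervalIntegrable_of_Ici
        le_rfl hx)
      (((hweight.fun_mul (continuousOn_id' _)).locallyIntegrableOn measurableSet_Ici
        |>.intervalIntegrable_of_Ici le_rfl hx).const_mul C)]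
    congr 1 with t
    ring
  rw [hsplit, partialSum_eq_div_log_sq_add_integral hc0 hc1 hx, li2_eq_div_log_sq_add_integral hx]
  ring

theorem partialSum_log_sq_mul_sub_mul_eq (hc0 : c 0 = 0) (hc1 : c 1 = 0) (C : ℝ) {x : ℝ}
    (hx : 2 ≤ x) :
    partialSum (fun k => log k ^ 2 * c k) x - C * x =
      log x ^ 2 * (partialSum c x - C * li2 x) -
        (∫ t in (2 : ℝ)..x, 2 * log t / t * (partialSum c t - C * li2 t)) - 2 * C := by
  have hweight := continuousOn_two_mul_log_div.mono (Set.Ici_subset_Ioi.2 zero_lt_two)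
  have hli2 : ContinuousOn li2 (Set.Ici 2) := fun t (ht : 2 ≤ t) =>
    (hasDerivAt_li2 (by linarith)).continuousAt.continuousWithinAt
  have hsplit : ∫ t in (2 : ℝ)..x, 2 * log t / t * (partialSum c t - C * li2 t) =
      (∫ t in (2 : ℝ)..x, 2 * log t / t * partialSum c t) -
        C * ∫ t in (2 : ℝ)..x, 2 * log t / t * li2 t := by
    rw [← intervalIntegral.integral_const_mul, ← intervalIntegral.integral_sub
      ((locallyIntegrableOn_mul_partialSum zero_le_two hweight c).intervalIntegrable_of_Ici
        le_rfl hx)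
      (((hweight.fun_mul hli2).locallyIntegrableOn measurableSet_Ici
        |>.intervalIntegrable_of_Ici le_rfl hx).const_mul C)]
    congr 1 with t
    ring
  rw [hsplit, partialSum_log_sq_mul_eq hc0 hc1 hx]
  linear_combination C * log_sq_mul_li2_sub_integral hx

theorem isLittleO_partialSum_sub_mul_li2 (hc0 : c 0 = 0) (hc1 : c 1 = 0) {C : ℝ}
    (h : (fun x => partialSum (fun k => log k ^ 2 * c k) x - C * x) =o[atTop] id) :
    (fun x => partialSum c x - C * li2 x) =o[atTop] li2 := by
  have hweight := continuousOn_two_div_mul_log_pow_three.mono (Set.Ici_subset_Ioi.2 one_lt_two)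
  have hmain : (fun x => 1 / log x ^ 2 * (partialSum (fun k => log k ^ 2 * c k) x - C * x))
      =o[atTop] li2 :=
    ((isBigO_refl _ _).mul_isLittleO h).trans_isBigO <|
      isBigO_div_log_sq_li2.congr_left fun x => by simp [div_eq_inv_mul]
  have hintegral : (fun x => ∫ t in (2 : ℝ)..x,
      2 / (t * log t ^ 3) * (partialSum (fun k => log k ^ 2 * c k) t - C * t)) =o[atTop] li2 := by
    refine IsLittleO.intervalIntegral_atTop
      (((isBigO_refl _ _).mul_isLittleO h).trans_isBigO isBigO_two_div_mul_log_pow_three_mul_self)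
      ?_ ((continuousOn_one_div_log_sq.mono (Set.Ici_subset_Ioi.2 one_lt_two)).locallyIntegrableOn
        measurableSet_Ici) (fun t _ => by positivity) tendsto_li2_atTop
    exact ((locallyIntegrableOn_mul_partialSum zero_le_two hweight _).sub
      (((hweight.fun_mul (continuousOn_id' _)).locallyIntegrableOn measurableSet_Ici).smul C)).congr
      (.of_forall fun t => by simp; ring)
  have hconst : (fun _ => C * (2 / log 2 ^ 2)) =o[atTop] li2 :=
    isLittleO_const_left.2 (.inr (tendsto_norm_atTop_atTop.comp tendsto_li2_atTop))
  refine ((hmain.add hintegral).add hconst).congr' ?_ .rfl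
  filter_upwards [eventually_ge_atTop 2] with x hx
  exact (partialSum_sub_mul_li2_eq hc0 hc1 C hx).symm

theorem isLittleO_partialSum_log_sq_mul_sub_mul (hc0 : c 0 = 0) (hc1 : c 1 = 0) {C : ℝ}
    (h : (fun x => partialSum c x - C * li2 x) =o[atTop] li2) :
    (fun x => partialSum (fun k => log k ^ 2 * c k) x - C * x) =o[atTop] id := by
  have hweight := continuousOn_two_mul_log_div.mono (Set.Ici_subset_Ioi.2 zero_lt_two)
  have hli2 : ContinuousOn li2 (Set.Ici 2) := fun t (ht : 2 ≤ t) =>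
    (hasDerivAt_li2 (by linarith)).continuousAt.continuousWithinAt
  have hmain : (fun x => log x ^ 2 * (partialSum c x - C * li2 x)) =o[atTop] id :=
    ((isBigO_refl _ _).mul_isLittleO h).trans_isBigO isBigO_log_sq_mul_li2
  have hintegral : (fun x => ∫ t in (2 : ℝ)..x, 2 * log t / t * (partialSum c t - C * li2 t))
      =o[atTop] id := by
    refine (IsLittleO.intervalIntegral_atTop (w := fun _ => 1)
      (((isBigO_refl _ _).mul_isLittleO h).trans_isBigO isBigO_two_mul_log_div_mul_li2)
      ?_ (locallyIntegrableOn_const 1) (fun _ _ => zero_le_one) ?_).trans_isBigO ?_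
    · exact ((locallyIntegrableOn_mul_partialSum zero_le_two hweight c).sub
        ((hweight.fun_mul hli2).locallyIntegrableOn measurableSet_Ici |>.smul C)).congr
        (.of_forall fun t => by simp; ring)
    · simpa [sub_eq_add_neg] using tendsto_atTop_add_const_right atTop (-2) tendsto_id
    · simpa using (isBigO_refl id atTop).sub (isLittleO_const_id_atTop (2 : ℝ)).isBigO
  refine ((hmain.sub hintegral).sub (isLittleO_const_id_atTop (2 * C))).congr' ?_ .rfl
  filter_upwards [eventually_ge_atTop 2] with x hx
  exact (partialSum_log_sq_mul_sub_mul_eq hc0 hc1 C hx).symm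

theorem tendsto_partialSum_log_sq_mul_div_iff (hc0 : c 0 = 0) (hc1 : c 1 = 0) (C : ℝ) :
    Tendsto (fun x => partialSum (fun k => log k ^ 2 * c k) x / x) atTop (𝓝 C) ↔
      Tendsto (fun x => partialSum c x / li2 x) atTop (𝓝 C) := by
  rw [tendsto_div_iff_isLittleO_sub_mul (eventually_ne_atTop 0),
    tendsto_div_iff_isLittleO_sub_mul (tendsto_li2_atTop.eventually_gt_atTop 0 |>.mono
      fun _ hx => hx.ne')]
  exact ⟨isLittleO_partialSum_sub_mul_li2 hc0 hc1,
    isLittleO_partialSum_log_sq_mul_sub_mul hc0 hc1⟩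

end PartialSum

def primePairIndicator (k : ℕ) (r : ℤ) (n : ℕ) : ℝ :=
  if n.Prime ∧ ((n : ℤ) ^ k + 2 * r).toNat.Prime then 1 else 0

theorem primePairTheta_eq_partialSum (k : ℕ) (r : ℤ) (x : ℝ) :
    primePairTheta k r x = partialSum (fun n => log n ^ 2 * primePairIndicator k r n) x := by
  rw [primePairTheta, partialSum, Finset.sum_filter, Nat.range_succ_eq_Icc_zero]
  simp [primePairIndicator]

theorem primePairCount_eq_partialSum (k : ℕ) (r : ℤ) (x : ℝ) :
    (primePairCount k r x : ℝ) = partialSum (primePairIndicator k r) x := by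
  rw [primePairCount, Finset.card_eq_sum_ones, Nat.cast_sum, partialSum, Finset.sum_filter,
    Nat.range_succ_eq_Icc_zero]
  simp [primePairIndicator]

theorem theta_asymptotic_iff_pi_asymptotic_general (k : ℕ) (r : ℤ) (C : ℝ) :
    Tendsto (fun x : ℝ => primePairTheta k r x / x) atTop (𝓝 C) ↔
      Tendsto (fun x : ℝ => (primePairCount k r x : ℝ) / li2 x) atTop (𝓝 C) := by
  simp only [primePairTheta_eq_partialSum, primePairCount_eq_partialSum]
  exact tendsto_partialSum_log_sq_mul_div_iff (by simp [primePairIndicator, Nat.not_prime_zero])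
    (by simp [primePairIndicator, Nat.not_prime_one]) C

/-- For `k ≥ 1`, nonzero `r` and `C ≥ 0`: `θ^k_{2r}(x)/x → C` as `x → ∞` if and only if
`π^k_{2r}(x)/li₂(x) → C` as `x → ∞`. -/
theorem theta_asymptotic_iff_pi_asymptotic (k : ℕ) (hk : 1 ≤ k) (r : ℤ) (hr : r ≠ 0)
    (C : ℝ) (hC : 0 ≤ C) :
    Tendsto (fun x : ℝ => primePairTheta k r x / x) atTop (𝓝 C) ↔
      Tendsto (fun x : ℝ => (primePairCount k r x : ℝ) / li2 x) atTop (𝓝 C) :=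
  theta_asymptotic_iff_pi_asymptotic_general k r C
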